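/- In the multi-agent setup, fix an agent i, a point ψ₀ⁱ ∈ Ψⁱ, and a counterfactual baseline B that assigns a real number B(o, a^{∖i}) to each joint observation o and each tuple a^{∖i} of actions of the agents other than i (so B does not depend on agent i's action). Then the Fréchet derivative at ψ₀ⁱ of ψⁱ ↦ ∑_s ∑_o ∑_a d(s)·E(o|s)·(∏_j πʲ(aʲ|oʲ))·B(o, a^{∖i}) is the zero map; equivalently, ∑_{s,o,a} d(s)E(o|s)(∏_j πʲ(aʲ|oʲ))·D_{ψⁱ}(log πⁱ_{ψⁱ}(aⁱ|oⁱ))|_{ψ₀ⁱ}·B(o, a^{∖i}) = 0, i.e., subtracting a baseline independent of aⁱ does not change the expected policy gradient of agent i. -/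

import Mathlib

/-!
Only the factor `πⁱ(aⁱ|oⁱ)` of the joint policy depends on `ψⁱ`, and the other factors and the
baseline do not depend on `aⁱ`. Summing over `aⁱ` first, the objective is a `ψⁱ`-independent
weight times `∑ₐⁱ πⁱ_{ψⁱ}(aⁱ|oⁱ) = 1`, hence constant; and since `π · D log π = D π`, the
score-weighted sum is such a weight times `∑ₐⁱ D πⁱ(aⁱ|oⁱ) = D 1 = 0`.
-/

open Finset

theorem fderiv_eq_zero_of_forall_eq {𝕜 E F : Type*} [NontriviallyNormedField 𝕜]
    [NormedAddCommGroup E] [NormedSpace 𝕜 E] [NormedAddCommGroup F] [NormedSpace 𝕜 F]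
    {f : E → F} {x₀ : E} (hf : ∀ x, f x = f x₀) : fderiv 𝕜 f x₀ = 0 := by
  rw [show f = fun _ => f x₀ from funext hf]
  exact fderiv_const_apply _

theorem sum_fderiv_eq_zero_of_sum_eq_const {𝕜 E F α : Type*} [NontriviallyNormedField 𝕜]
    [NormedAddCommGroup E] [NormedSpace 𝕜 E] [NormedAddCommGroup F] [NormedSpace 𝕜 F]
    [Fintype α] {f : α → E → F} {p : E} (hf : ∀ x, DifferentiableAt 𝕜 (f x) p) {C : F}
    (hC : ∀ q, ∑ x, f x q = C) : ∑ x, fderiv 𝕜 (f x) p = 0 := by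
  rw [← fderiv_fun_sum fun x _ => hf x, show (fun q => ∑ x, f x q) = fun _ => C from funext hC]
  exact fderiv_const_apply _

section Pi

variable {ι : Type*} [Fintype ι] [DecidableEq ι]

theorem prod_apply_update {M : Type*} [CommMonoid M] {Ψ : ι → Type*} (g : ∀ j, Ψ j → M)
    (ψ : ∀ j, Ψ j) (i : ι) (x : Ψ i) :
    ∏ j, g j (Function.update ψ i x j) = g i x * ∏ j ∈ univ.erase i, g j (ψ j) := by
  rw [← mul_prod_erase univ _ (mem_univ i), Function.update_self]
  congr 1
  exact prod_congr rfl fun j hj => by rw [Function.update_of_ne (ne_of_mem_erase hj)]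

theorem sum_smul_apply_eq_of_sum_eq {A : ι → Type*} [∀ j, Fintype (A j)]
    {R M : Type*} [Semiring R] [AddCommMonoid M] [Module R M] (i : ι) (c : (∀ j, A j) → R)
    (hc : ∀ a a', (∀ j, j ≠ i → a j = a' j) → c a = c a') {g g' : A i → M}
    (hg : ∑ x, g x = ∑ x, g' x) : ∑ a, c a • g (a i) = ∑ a, c a • g' (a i) := by
  obtain hA | ⟨⟨x₀⟩⟩ := isEmpty_or_nonempty (A i)
  · have : IsEmpty (∀ j, A j) := ⟨fun a => hA.elim (a i)⟩
    simp
  set e := Equiv.piSplitAt i A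
  have he : ∀ x r, c (e.symm (x, r)) = c (e.symm (x₀, r)) := fun x r =>
    hc _ _ fun j hj => by simp [e, Equiv.piSplitAt_symm_apply, hj]
  have he_i : ∀ x r, e.symm (x, r) i = x := fun x r => by simp [e, Equiv.piSplitAt_symm_apply]
  simp only [← e.symm.sum_comp, Fintype.sum_prod_type_right, he, he_i, ← smul_sum, hg]

end Pi

theorem baseline_gradient_vanishes_general
    {ι : Type*} [Fintype ι] [DecidableEq ι]
    {S : Type*} [Fintype S]
    {O : ι → Type*} [∀ j, Fintype (O j)]
    {A : ι → Type*} [∀ j, Fintype (A j)]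
    {Ψ : ι → Type*} [∀ j, NormedAddCommGroup (Ψ j)] [∀ j, NormedSpace ℝ (Ψ j)]
    (π : ∀ j, Ψ j → O j → A j → ℝ)
    (hpos : ∀ (j : ι) (ψj : Ψ j) (oj : O j) (aj : A j), 0 < π j ψj oj aj)
    (hdiff : ∀ (j : ι) (ψj : Ψ j) (oj : O j) (aj : A j),
      DifferentiableAt ℝ (fun p => π j p oj aj) ψj)
    (hnorm : ∀ (j : ι) (ψj : Ψ j) (oj : O j), ∑ aj : A j, π j ψj oj aj = 1)
    (d : S → ℝ)
    (E : S → (∀ j, O j) → ℝ)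
    (i : ι) (ψ : ∀ j, Ψ j)
    (B : (∀ j, O j) → (∀ j, A j) → ℝ)
    (hB : ∀ (o : ∀ j, O j) (a a' : ∀ j, A j),
      (∀ j, j ≠ i → a j = a' j) → B o a = B o a') :
    fderiv ℝ (fun ψi : Ψ i => ∑ s : S, ∑ o : (∀ j, O j), ∑ a : (∀ j, A j),
        d s * E s o * (∏ j, π j (Function.update ψ i ψi j) (o j) (a j)) * B o a)
        (ψ i) = 0
    ∧ ∑ s : S, ∑ o : (∀ j, O j), ∑ a : (∀ j, A j),
        (d s * E s o * (∏ j, π j (ψ j) (o j) (a j)) * B o a) •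
          fderiv ℝ (fun ψi : Ψ i => Real.log (π i ψi (o i) (a i))) (ψ i) = 0 := by
  set w : (∀ j, O j) → (∀ j, A j) → ℝ :=
    fun o a => (∏ j ∈ univ.erase i, π j (ψ j) (o j) (a j)) * B o a
  have hw : ∀ o a a', (∀ j, j ≠ i → a j = a' j) → w o a = w o a' := fun o a a' h => by
    simp only [w, hB o a a' h]
    congr 1
    exact prod_congr rfl fun j hj => by rw [h j (ne_of_mem_erase hj)]
  have hsummand : ∀ s o a (ψi : Ψ i),
      d s * E s o * (∏ j, π j (Function.update ψ i ψi j) (o j) (a j)) * B o a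
        = d s * E s o * (w o a • π i ψi (o i) (a i)) := fun s o a ψi => by
    rw [prod_apply_update (fun j p => π j p (o j) (a j))]
    simp only [w, smul_eq_mul]
    ring
  refine ⟨fderiv_eq_zero_of_forall_eq fun ψi => ?_,
    sum_eq_zero fun s _ => sum_eq_zero fun o _ => ?_⟩
  · refine sum_congr rfl fun s _ => sum_congr rfl fun o _ => ?_
    simp only [hsummand, ← mul_sum]
    rw [sum_smul_apply_eq_of_sum_eq i (w o) (hw o) (g' := π i (ψ i) (o i)) (by simp only [hnorm])]
  · have hlog_score : ∀ a, (d s * E s o * (∏ j, π j (ψ j) (o j) (a j)) * B o a) •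
        fderiv ℝ (fun ψi => Real.log (π i ψi (o i) (a i))) (ψ i)
          = (d s * E s o) • (w o a • fderiv ℝ (fun p => π i p (o i) (a i)) (ψ i)) := fun a => by
      rw [fderiv.log (hdiff i _ _ _) (hpos i _ _ _).ne', ← Function.update_eq_self i ψ,
        hsummand, Function.update_eq_self, smul_smul, smul_smul, smul_eq_mul,
        ← mul_assoc, mul_inv_cancel_right₀ (hpos i _ _ _).ne']
    simp only [hlog_score, ← smul_sum]
    rw [sum_smul_apply_eq_of_sum_eq i (w o) (hw o)
      (g := fun x => fderiv ℝ (fun p => π i p (o i) x) (ψ i)) (g' := 0) (by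
      simp [sum_fderiv_eq_zero_of_sum_eq_const (hdiff i (ψ i) (o i)) (hnorm i · (o i))])]
    simp

/-- Subtracting a counterfactual baseline `B(o, a^{∖i})` (independent of agent `i`'s
action) does not change the expected policy gradient of agent `i`: the Fréchet
derivative at `ψ i` of `ψⁱ ↦ ∑_{s,o,a} d(s)·E(o|s)·(∏ j, πʲ(aʲ|oʲ))·B(o,a^{∖i})` is
the zero map, and equivalently the corresponding score-weighted sum vanishes. -/
theorem baseline_gradient_vanishes
    {ι : Type*} [Fintype ι] [DecidableEq ι]
    {S : Type*} [Fintype S]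
    {O : ι → Type*} [∀ j, Fintype (O j)]
    {A : ι → Type*} [∀ j, Fintype (A j)]
    {Ψ : ι → Type*} [∀ j, NormedAddCommGroup (Ψ j)] [∀ j, NormedSpace ℝ (Ψ j)]
    (π : ∀ j, Ψ j → O j → A j → ℝ)
    (hpos : ∀ (j : ι) (ψj : Ψ j) (oj : O j) (aj : A j), 0 < π j ψj oj aj)
    (hdiff : ∀ (j : ι) (ψj : Ψ j) (oj : O j) (aj : A j),
      DifferentiableAt ℝ (fun p => π j p oj aj) ψj)
    (hnorm : ∀ (j : ι) (ψj : Ψ j) (oj : O j), ∑ aj : A j, π j ψj oj aj = 1)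
    (d : S → ℝ) (hd : ∀ s, 0 ≤ d s)
    (E : S → (∀ j, O j) → ℝ) (hE : ∀ s o, 0 ≤ E s o)
    (i : ι) (ψ : ∀ j, Ψ j)
    (B : (∀ j, O j) → (∀ j, A j) → ℝ)
    (hB : ∀ (o : ∀ j, O j) (a a' : ∀ j, A j),
      (∀ j, j ≠ i → a j = a' j) → B o a = B o a') :
    fderiv ℝ (fun ψi : Ψ i => ∑ s : S, ∑ o : (∀ j, O j), ∑ a : (∀ j, A j),
        d s * E s o * (∏ j, π j (Function.update ψ i ψi j) (o j) (a j)) * B o a)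
        (ψ i) = 0
    ∧ ∑ s : S, ∑ o : (∀ j, O j), ∑ a : (∀ j, A j),
        (d s * E s o * (∏ j, π j (ψ j) (o j) (a j)) * B o a) •
          fderiv ℝ (fun ψi : Ψ i => Real.log (π i ψi (o i) (a i))) (ψ i) = 0 :=
  baseline_gradient_vanishes_general π hpos hdiff hnorm d E i ψ B hB
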